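/- Let α, σ > 0 and set p = α/(α+σ). On a probability space let ξ_1, ξ_2, … be i.i.d. random variables with the exponential distribution of rate α, and for each n let K_n be an ℕ-valued random variable independent of the sequence (ξ_i) such that K_n/n → p in probability and such that almost surely K_n ≤ K_{n+1} for all n. Define ψ_n := max_{1 ≤ i ≤ K_n} ξ_i (with ψ_n := 0 if K_n = 0). Then ψ_n → ∞ almost surely as n → ∞. -/

import Mathlib

/-!
Each `ξ i` exceeds a level `M` with the same positive probability `exp (-α M)`, so by the second
Borel–Cantelli lemma almost surely infinitely many `ξ i` exceed every level. Since `K n / n → p > 0`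
in probability, `K n` is almost surely unbounded, hence, being nondecreasing, tends to infinity;
then `ψ n` eventually dominates any fixed `ξ i`.
-/

open MeasureTheory ProbabilityTheory Filter

/-- The largest inactivity period: the maximum of the first `K n ω` of the dormancy periods
`ξ i ω`, taken to be `0` if `K n ω = 0`. -/
noncomputable def psi {Ω : Type*} (ξ : ℕ → Ω → ℝ) (K : ℕ → Ω → ℕ) (n : ℕ) (ω : Ω) : ℝ :=
  if h : (Finset.Icc 1 (K n ω)).Nonempty then (Finset.Icc 1 (K n ω)).sup' h fun i => ξ i ω
  else 0

section Exceedances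

variable {Ω : Type*} [MeasurableSpace Ω] {P : Measure Ω} [IsProbabilityMeasure P]

lemma measure_lt_eq_ofReal_exp {X : Ω → ℝ} (hX : Measurable X) {α x : ℝ} (hα : 0 ≤ α)
    (hx : 0 ≤ x) (hcdf : P {ω | X ω ≤ x} = ENNReal.ofReal (1 - Real.exp (-α * x))) :
    P {ω | x < X ω} = ENNReal.ofReal (Real.exp (-α * x)) := by
  have hexp_le_one : Real.exp (-α * x) ≤ 1 := Real.exp_le_one_iff.mpr (by nlinarith)
  have hcompl : {ω | x < X ω} = {ω | X ω ≤ x}ᶜ := by ext; simp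
  rw [hcompl, prob_compl_eq_one_sub (measurableSet_le hX measurable_const), hcdf,
    ENNReal.ofReal_sub _ (Real.exp_pos _).le, ENNReal.ofReal_one,
    ENNReal.sub_sub_cancel ENNReal.one_ne_top (ENNReal.ofReal_le_one.mpr hexp_le_one)]

lemma ae_frequently_lt_of_iIndepFun {ξ : ℕ → Ω → ℝ} (hξmeas : ∀ i, Measurable (ξ i))
    (hξindep : iIndepFun ξ P) {M : ℝ} (hsum : ∑' i, P {ω | M < ξ i ω} = ⊤) :
    ∀ᵐ ω ∂P, ∃ᶠ i in atTop, M < ξ i ω := by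
  set s : ℕ → Set Ω := fun i => ξ i ⁻¹' Set.Ioi M
  have hs : ∀ i, MeasurableSet (s i) := fun i => hξmeas i measurableSet_Ioi
  have hsindep : iIndepSet s P :=
    (iIndepSet_iff_meas_biInter hs).mpr fun t =>
      hξindep.measure_inter_preimage_eq_mul t fun _ _ => measurableSet_Ioi
  have hlimsup : P (limsup s atTop) = 1 := measure_limsup_eq_one hs hsindep hsum
  have hae : ∀ᵐ ω ∂P, ω ∈ limsup s atTop :=
    (ae_iff_measure_eq (MeasurableSet.measurableSet_limsup hs).nullMeasurableSet).mpr
      (by rw [measure_univ]; exact hlimsup)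
  filter_upwards [hae] with ω hω
  exact mem_limsup_iff_frequently_mem.mp hω

lemma ae_frequently_lt_of_exponential {ξ : ℕ → Ω → ℝ} {α : ℝ} (hα : 0 ≤ α)
    (hξmeas : ∀ i, Measurable (ξ i))
    (hξdist : ∀ i, ∀ x : ℝ, 0 ≤ x →
      P {ω | ξ i ω ≤ x} = ENNReal.ofReal (1 - Real.exp (-α * x)))
    (hξindep : iIndepFun ξ P) :
    ∀ᵐ ω ∂P, ∀ M : ℕ, ∃ᶠ i in atTop, (M : ℝ) < ξ i ω := by
  refine ae_all_iff.mpr fun M => ae_frequently_lt_of_iIndepFun hξmeas hξindep ?_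
  simp_rw [measure_lt_eq_ofReal_exp (hξmeas _) hα M.cast_nonneg (hξdist _ _ M.cast_nonneg)]
  exact ENNReal.tsum_const_eq_top_of_ne_zero (ENNReal.ofReal_pos.mpr (Real.exp_pos _)).ne'

end Exceedances

lemma lt_abs_div_sub_of_lt {p k m n : ℝ} (hp : 0 < p) (hn : 2 * m ≤ p * n) (hk0 : 0 ≤ k)
    (hk : k < m) : p / 2 < |k / n - p| := by
  have hn0 : 0 < n := pos_of_mul_pos_right (by linarith) hp.le
  have hkn : k / n < p / 2 := by rw [div_lt_iff₀ hn0]; linarith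
  calc p / 2 < -(k / n - p) := by linarith
    _ ≤ |k / n - p| := neg_le_abs _

lemma ae_unbounded_of_div_tendsto_pos {Ω : Type*} [MeasurableSpace Ω] {P : Measure Ω}
    [IsFiniteMeasure P] {K : ℕ → Ω → ℕ} {p : ℝ} (hp : 0 < p)
    (hKp : ∀ ε : ℝ, 0 < ε →
      Tendsto (fun n : ℕ => (P {ω | ε < |(K n ω : ℝ) / (n : ℝ) - p|}).toReal)
        atTop (nhds 0)) :
    ∀ᵐ ω ∂P, ∀ m : ℕ, ∃ n, m ≤ K n ω := by
  refine ae_all_iff.mpr fun m => ae_iff.mpr ?_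
  have hbounded_sub : ∀ᶠ n : ℕ in atTop,
      {ω | ¬ ∃ n, m ≤ K n ω} ⊆ {ω | p / 2 < |(K n ω : ℝ) / (n : ℝ) - p|} := by
    obtain ⟨N, hN⟩ := exists_nat_ge (2 * m / p)
    filter_upwards [eventually_ge_atTop N] with n hn ω hω
    push Not at hω
    refine lt_abs_div_sub_of_lt (m := m) hp ?_ (Nat.cast_nonneg _) (by exact_mod_cast hω n)
    rw [div_le_iff₀' hp] at hN
    exact hN.trans (mul_le_mul_of_nonneg_left (by exact_mod_cast hn) hp.le)
  have hle : ∀ᶠ n : ℕ in atTop, (P {ω | ¬ ∃ n, m ≤ K n ω}).toReal ≤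
      (P {ω | p / 2 < |(K n ω : ℝ) / (n : ℝ) - p|}).toReal :=
    hbounded_sub.mono fun _ h => ENNReal.toReal_mono (measure_ne_top _ _) (measure_mono h)
  have hzero : (P {ω | ¬ ∃ n, m ≤ K n ω}).toReal = 0 :=
    le_antisymm (ge_of_tendsto (hKp _ (half_pos hp)) hle) ENNReal.toReal_nonneg
  exact ((ENNReal.toReal_eq_zero_iff _).mp hzero).resolve_right (measure_ne_top _ _)

section Psi

variable {Ω : Type*} {ξ : ℕ → Ω → ℝ} {K : ℕ → Ω → ℕ}

lemma le_psi {n i : ℕ} {ω : Ω} (hi : i ∈ Finset.Icc 1 (K n ω)) : ξ i ω ≤ psi ξ K n ω := by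
  rw [psi, dif_pos ⟨i, hi⟩]
  exact Finset.le_sup' (fun j => ξ j ω) hi

lemma tendsto_psi_atTop {ω : Ω} (hK : Tendsto (fun n => K n ω) atTop atTop)
    (hξ : ∀ M : ℕ, ∃ᶠ i in atTop, (M : ℝ) < ξ i ω) :
    Tendsto (fun n => psi ξ K n ω) atTop atTop := by
  refine tendsto_atTop.mpr fun b => ?_
  obtain ⟨M, hbM⟩ := exists_nat_ge b
  obtain ⟨i, hMi, hi⟩ := ((hξ M).and_eventually (eventually_ge_atTop 1)).exists
  filter_upwards [hK.eventually_ge_atTop i] with n hn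
  exact hbM.trans (hMi.le.trans (le_psi (Finset.mem_Icc.mpr ⟨hi, hn⟩)))

end Psi

theorem largest_inactivity_diverges_general
    {Ω : Type*} [MeasurableSpace Ω] (P : Measure Ω) [IsProbabilityMeasure P]
    (α σ : ℝ) (hα : 0 < α) (hσ : 0 < σ) (p : ℝ) (hp : p = α / (α + σ))
    (ξ : ℕ → Ω → ℝ) (K : ℕ → Ω → ℕ)
    (hξmeas : ∀ i, Measurable (ξ i))
    (hξdist : ∀ i, ∀ x : ℝ, 0 ≤ x →
      P {ω | ξ i ω ≤ x} = ENNReal.ofReal (1 - Real.exp (-α * x)))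
    (hξindep : iIndepFun ξ P)
    (hKp : ∀ ε : ℝ, 0 < ε →
      Tendsto (fun n : ℕ => (P {ω | ε < |(K n ω : ℝ) / (n : ℝ) - p|}).toReal)
        atTop (nhds 0))
    (hKmono : ∀ᵐ ω ∂P, ∀ n : ℕ, K n ω ≤ K (n + 1) ω) :
    ∀ᵐ ω ∂P, Tendsto (fun n : ℕ => psi ξ K n ω) atTop atTop := by
  have hp_pos : 0 < p := by rw [hp]; positivity
  filter_upwards [ae_frequently_lt_of_exponential hα.le hξmeas hξdist hξindep,
    ae_unbounded_of_div_tendsto_pos hp_pos hKp, hKmono] with ω hξ hKunbdd hKmono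
  exact tendsto_psi_atTop
    (tendsto_atTop_atTop_of_monotone (monotone_nat_of_le_succ hKmono) hKunbdd) hξ

/-- Almost-sure divergence of the largest inactivity periods: if moreover `K n` is almost
surely nondecreasing in `n`, then `ψ_n → ∞` almost surely. -/
theorem largest_inactivity_diverges
    {Ω : Type*} [MeasurableSpace Ω] (P : Measure Ω) [IsProbabilityMeasure P]
    (α σ : ℝ) (hα : 0 < α) (hσ : 0 < σ) (p : ℝ) (hp : p = α / (α + σ))
    (ξ : ℕ → Ω → ℝ) (K : ℕ → Ω → ℕ)
    (hξmeas : ∀ i, Measurable (ξ i)) (hKmeas : ∀ n, Measurable (K n))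
    (hξdist : ∀ i, ∀ x : ℝ, 0 ≤ x →
      P {ω | ξ i ω ≤ x} = ENNReal.ofReal (1 - Real.exp (-α * x)))
    (hξindep : iIndepFun ξ P)
    (hKindep : ∀ n, IndepFun (K n) (fun ω (i : ℕ) => ξ i ω) P)
    (hKp : ∀ ε : ℝ, 0 < ε →
      Tendsto (fun n : ℕ => (P {ω | ε < |(K n ω : ℝ) / (n : ℝ) - p|}).toReal)
        atTop (nhds 0))
    (hKmono : ∀ᵐ ω ∂P, ∀ n : ℕ, K n ω ≤ K (n + 1) ω) :
    ∀ᵐ ω ∂P, Tendsto (fun n : ℕ => psi ξ K n ω) atTop atTop :=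
  largest_inactivity_diverges_general P α σ hα hσ p hp ξ K hξmeas hξdist hξindep hKp hKmono
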